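/- arXiv:1608.06944 — 5 statements merged into one kernel-verified Lean document; each statement's English description precedes it below -/
import Mathlib

section
/- A connected signed graph admits a nowhere-zero 2-flow if and only if it is Eulerian (every vertex has even degree) and the number of its negative edges is even. -/
open Finset

/-- A signed multigraph on vertex type `V` with edge type `E`:
each edge has an ordered pair of endpoints and a sign (`neg e = true` means negative). -/
structure SignedMultigraph (V E : Type) where
  ends : E → V × V
  neg : E → Bool

namespace SignedMultigraph

variable {V E : Type} [Fintype V] [Fintype E] [DecidableEq V] [DecidableEq E]

/-- Degree of `v` in the edge subset `F` (loops count twice). -/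
def degIn (G : SignedMultigraph V E) (F : Finset E) (v : V) : ℕ :=
  ∑ e ∈ F, ((if (G.ends e).1 = v then 1 else 0) + (if (G.ends e).2 = v then 1 else 0))

/-- Adjacency via an edge of `F`. -/
def adj (G : SignedMultigraph V E) (F : Finset E) (v w : V) : Prop :=
  ∃ e ∈ F, G.ends e = (v, w) ∨ G.ends e = (w, v)

/-- Vertices incident with an edge of `F`. -/
def supp (G : SignedMultigraph V E) (F : Finset E) : Set V :=
  {v | ∃ e ∈ F, (G.ends e).1 = v ∨ (G.ends e).2 = v}

/-- Reachability using edges of `F`. -/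
def reach (G : SignedMultigraph V E) (F : Finset E) : V → V → Prop :=
  Relation.ReflTransGen (G.adj F)

/-- `F` is (the edge set of) a circuit: nonempty, every vertex has degree 0 or 2,
and the support is connected. -/
def IsCircuit (G : SignedMultigraph V E) (F : Finset E) : Prop :=
  F.Nonempty ∧ (∀ v, G.degIn F v = 0 ∨ G.degIn F v = 2) ∧
    ∀ v ∈ G.supp F, ∀ w ∈ G.supp F, G.reach F v w

/-- The negative edges inside `F`. -/
def negEdges (G : SignedMultigraph V E) (F : Finset E) : Finset E :=
  F.filter (fun e => G.neg e = true)

def IsBalancedCircuit (G : SignedMultigraph V E) (F : Finset E) : Prop :=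
  G.IsCircuit F ∧ Even (G.negEdges F).card

def IsUnbalancedCircuit (G : SignedMultigraph V E) (F : Finset E) : Prop :=
  G.IsCircuit F ∧ Odd (G.negEdges F).card

/-- A signed graph is balanced if every circuit has an even number of negative edges. -/
def Balanced (G : SignedMultigraph V E) : Prop :=
  ∀ F : Finset E, G.IsCircuit F → Even (G.negEdges F).card

/-- `P` is the edge set of a path from `v₁` to `v₂` (trivial iff `v₁ = v₂`). -/
def IsPathBetween (G : SignedMultigraph V E) (P : Finset E) (v₁ v₂ : V) : Prop :=
  if v₁ = v₂ then P = ∅ else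
    G.degIn P v₁ = 1 ∧ G.degIn P v₂ = 1 ∧
    (∀ v, v ≠ v₁ → v ≠ v₂ → G.degIn P v = 0 ∨ G.degIn P v = 2) ∧
    ∀ v ∈ G.supp P, ∀ w ∈ G.supp P, G.reach P v w

/-- `F` is a barbell: two unbalanced circuits joined by a (possibly trivial) path. -/
def IsBarbell (G : SignedMultigraph V E) (F : Finset E) : Prop :=
  ∃ (C₁ C₂ P : Finset E) (v₁ v₂ : V),
    G.IsUnbalancedCircuit C₁ ∧ G.IsUnbalancedCircuit C₂ ∧
    G.IsPathBetween P v₁ v₂ ∧ v₁ ∈ G.supp C₁ ∧ v₂ ∈ G.supp C₂ ∧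
    F = C₁ ∪ C₂ ∪ P ∧
    (G.supp C₁ \ {v₁}) ∩ G.supp (C₂ ∪ P) = ∅ ∧
    (G.supp C₂ \ {v₂}) ∩ G.supp (C₁ ∪ P) = ∅

/-- A signed circuit is a balanced circuit or a barbell. -/
def IsSignedCircuit (G : SignedMultigraph V E) (F : Finset E) : Prop :=
  G.IsBalancedCircuit F ∨ G.IsBarbell F

/-- A bidirection `d` assigns to each half-edge a direction (`true` = toward its endpoint);
it is an orientation of the signed graph if negative edges are exactly the
extroverted/introverted ones. -/
def IsOrientation (G : SignedMultigraph V E) (d : E → Bool × Bool) : Prop :=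
  ∀ e, G.neg e = true ↔ (d e).1 = (d e).2

/-- Net inflow at vertex `v` (incoming half-edges count `+φ e`, outgoing `-φ e`). -/
def vertexSum {Γ : Type} [AddCommGroup Γ] (G : SignedMultigraph V E)
    (d : E → Bool × Bool) (φ : E → Γ) (v : V) : Γ :=
  ∑ e, ((if (G.ends e).1 = v then (if (d e).1 then φ e else -φ e) else 0) +
        (if (G.ends e).2 = v then (if (d e).2 then φ e else -φ e) else 0))

/-- `(d, φ)` is a flow: `d` is an orientation and Kirchhoff's law holds at every vertex. -/
def IsFlow {Γ : Type} [AddCommGroup Γ] (G : SignedMultigraph V E)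
    (d : E → Bool × Bool) (φ : E → Γ) : Prop :=
  G.IsOrientation d ∧ ∀ v, G.vertexSum d φ v = 0

/-- Nowhere-zero `Γ`-flow. -/
def HasNZGroupFlow (G : SignedMultigraph V E) (Γ : Type) [AddCommGroup Γ] : Prop :=
  ∃ (d : E → Bool × Bool) (φ : E → Γ), G.IsFlow d φ ∧ ∀ e, φ e ≠ 0

/-- Flow-admissible: has a nowhere-zero integer flow. -/
def FlowAdmissible (G : SignedMultigraph V E) : Prop :=
  ∃ (d : E → Bool × Bool) (φ : E → ℤ), G.IsFlow d φ ∧ ∀ e, φ e ≠ 0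

/-- Nowhere-zero `k`-flow: integer flow with `0 < |φ e| < k`. -/
def HasNZkFlow (G : SignedMultigraph V E) (k : ℤ) : Prop :=
  ∃ (d : E → Bool × Bool) (φ : E → ℤ), G.IsFlow d φ ∧ ∀ e, 0 < |φ e| ∧ |φ e| < k

/-- The flow number: least `k : ℕ` admitting a nowhere-zero `k`-flow. -/
noncomputable def flowNum (G : SignedMultigraph V E) : ℕ :=
  sInf {k : ℕ | G.HasNZkFlow (k : ℤ)}

/-- Circular `t`-flow: real flow with `1 ≤ |φ e| ≤ t - 1`. -/
def HasCircularFlow (G : SignedMultigraph V E) (t : ℝ) : Prop :=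
  ∃ (d : E → Bool × Bool) (φ : E → ℝ), G.IsFlow d φ ∧ ∀ e, 1 ≤ |φ e| ∧ |φ e| ≤ t - 1

/-- The circular flow number. -/
noncomputable def circFlowNum (G : SignedMultigraph V E) : ℝ :=
  sInf {t : ℝ | G.HasCircularFlow t}

/-- Bridgeless: the endpoints of each edge are joined by a path avoiding that edge. -/
def Bridgeless (G : SignedMultigraph V E) : Prop :=
  ∀ e : E, G.reach (Finset.univ.erase e) (G.ends e).1 (G.ends e).2

/-- Switching at a vertex `v`. -/
def switch (G : SignedMultigraph V E) (v : V) : SignedMultigraph V E where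
  ends := G.ends
  neg := fun e => xor (G.neg e) (xor (decide ((G.ends e).1 = v)) (decide ((G.ends e).2 = v)))

/-- Switching equivalence of signed graphs on the same underlying graph. -/
def Equivalent (G₁ G₂ : SignedMultigraph V E) : Prop :=
  Relation.ReflTransGen (fun H₁ H₂ => ∃ v : V, H₂ = H₁.switch v) G₁ G₂

/-- Antibalanced: switching-equivalent to an all-negative signed graph. -/
def Antibalanced (G : SignedMultigraph V E) : Prop :=
  ∃ G' : SignedMultigraph V E, G.Equivalent G' ∧ ∀ e, G'.neg e = true

/-- No vertex of the support of `S` is a source or a sink of `d` restricted to `S`. -/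
def NoSourceSink (G : SignedMultigraph V E) (d : E → Bool × Bool) (S : Finset E) : Prop :=
  ∀ v ∈ G.supp S,
    (∃ e ∈ S, ((G.ends e).1 = v ∧ (d e).1 = true) ∨ ((G.ends e).2 = v ∧ (d e).2 = true)) ∧
    (∃ e ∈ S, ((G.ends e).1 = v ∧ (d e).1 = false) ∨ ((G.ends e).2 = v ∧ (d e).2 = false))

/-- Zero-sum `k`-flow on the underlying (unsigned) graph. -/
def ZeroSumFlow (G : SignedMultigraph V E) (k : ℤ) : Prop :=
  ∃ f : E → ℤ, (∀ e, 1 ≤ |f e| ∧ |f e| ≤ k - 1) ∧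
    ∀ v : V, (∑ e, ((if (G.ends e).1 = v then f e else 0) +
                    (if (G.ends e).2 = v then f e else 0))) = 0

end SignedMultigraph


/-!
In a nowhere-zero 2-flow every value is `±1`. Read modulo 2, Kirchhoff's law at `v` says that
`v` has even degree. Summed over all vertices, the two half-edges of a positive edge cancel while
the two half-edges of a negative edge carry the same value, so twice a sum of `±1` over the
negative edges vanishes, and there is an even number of them.

Conversely, a connected graph with all degrees even has an Euler circuit: a longest trail is
closed (a trail with distinct ends has an unused edge at its last vertex by parity) and uses every
edge (otherwise, by connectivity, an unused edge meets the trail, which can be rotated to end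
there). Walk along the circuit and orient each edge so that the trail always enters and leaves a
vertex through half-edges of opposite directions; the direction of the leaving half-edge flips
exactly at negative edges, so it comes back to its initial value after the full circuit because
the number of negative edges is even. The constant flow `1` is then a nowhere-zero 2-flow.
-/

theorem Int.odd_of_abs_pos_of_abs_lt_two {x : ℤ} (h₀ : 0 < |x|) (h₂ : |x| < 2) : Odd x := by
  rw [abs_pos] at h₀
  rw [abs_lt] at h₂
  rw [Int.odd_iff]
  omega

theorem ite_neg_intCast_zmod_two_of_odd {x : ℤ} (hx : Odd x) (b : Bool) :
    (if b then (x : ZMod 2) else -x) = 1 := by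
  cases b <;> simp [hx.intCast_zmod_two, ZMod.neg_eq_self_mod_two]

def boolSign (b : Bool) : ℤ :=
  if b then 1 else -1

theorem boolSign_not (b : Bool) : boolSign (!b) = -boolSign b := by
  cases b <;> simp [boolSign]

namespace SignedMultigraph

variable {V E : Type}

section Parity

variable [Fintype E] [DecidableEq V]

variable {G : SignedMultigraph V E} {d : E → Bool × Bool}

theorem sum_vertexSum [Fintype V] {Γ : Type} [AddCommGroup Γ] (hd : G.IsOrientation d)
    (φ : E → Γ) :
    ∑ v, G.vertexSum d φ v =
      ∑ e ∈ G.negEdges univ, 2 • (if (d e).1 then φ e else -φ e) := by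
  have hedge : ∀ e, (if (d e).1 then φ e else -φ e) + (if (d e).2 then φ e else -φ e) =
      if G.neg e = true then 2 • (if (d e).1 then φ e else -φ e) else 0 := by
    intro e
    have := hd e
    cases h₁ : (d e).1 <;> cases h₂ : (d e).2 <;> cases hn : G.neg e <;> simp_all [two_nsmul]
  simp only [vertexSum]
  rw [Finset.sum_comm]
  simp only [Finset.sum_add_distrib, Finset.sum_ite_eq, Finset.mem_univ, if_true, hedge,
    negEdges, Finset.sum_filter]

theorem vertexSum_intCast_zmod_two {φ : E → ℤ} (hφ : ∀ e, Odd (φ e)) (v : V) :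
    ((G.vertexSum d φ v : ℤ) : ZMod 2) = G.degIn univ v := by
  simp only [vertexSum, degIn]
  push_cast
  simp only [ite_neg_intCast_zmod_two_of_odd (hφ _)]

theorem IsFlow.even_degIn {φ : E → ℤ} (hf : G.IsFlow d φ) (hφ : ∀ e, Odd (φ e)) (v : V) :
    Even (G.degIn univ v) := by
  rw [← ZMod.natCast_eq_zero_iff_even, ← vertexSum_intCast_zmod_two hφ, hf.2 v, Int.cast_zero]

theorem IsFlow.even_card_negEdges [Fintype V] {φ : E → ℤ} (hf : G.IsFlow d φ)
    (hφ : ∀ e, Odd (φ e)) :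
    Even (G.negEdges univ).card := by
  have hsum : ∑ e ∈ G.negEdges univ, (if (d e).1 then φ e else -φ e) = 0 := by
    have h := sum_vertexSum hf.1 φ
    rw [← Finset.smul_sum] at h
    simp only [hf.2, Finset.sum_const_zero, nsmul_eq_mul] at h
    omega
  rw [← ZMod.natCast_eq_zero_iff_even]
  calc ((G.negEdges univ).card : ZMod 2)
      = ∑ e ∈ G.negEdges univ, (1 : ZMod 2) := by simp
    _ = ∑ e ∈ G.negEdges univ, (((if (d e).1 then φ e else -φ e : ℤ)) : ZMod 2) := by
        push_cast
        simp only [ite_neg_intCast_zmod_two_of_odd (hφ _)]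
    _ = 0 := by rw [← Int.cast_sum, hsum, Int.cast_zero]

end Parity

section Trails

variable (G : SignedMultigraph V E)

/-- A step `(e, b)` runs along `e` forwards if `b` and backwards otherwise; it leaves `src` and
enters `dst`. -/
def src (s : E × Bool) : V :=
  if s.2 then (G.ends s.1).1 else (G.ends s.1).2

def dst (s : E × Bool) : V :=
  if s.2 then (G.ends s.1).2 else (G.ends s.1).1

inductive IsTrail : List (E × Bool) → V → V → Prop
  | nil (v : V) : IsTrail [] v v
  | cons (s : E × Bool) {L : List (E × Bool)} {w : V} (h : IsTrail L (G.dst s) w)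
      (hs : s.1 ∉ L.map Prod.fst) : IsTrail (s :: L) (G.src s) w

def Incident (e : E) (v : V) : Prop :=
  (G.ends e).1 = v ∨ (G.ends e).2 = v

variable {G}

theorem exists_src_eq {e : E} {v : V} (h : G.Incident e v) :
    ∃ b, G.src (e, b) = v :=
  h.elim (fun h => ⟨true, h⟩) fun h => ⟨false, h⟩

theorem exists_incident_of_degIn_ne_zero [DecidableEq V] {F : Finset E} {v : V}
    (h : G.degIn F v ≠ 0) :
    ∃ e ∈ F, G.Incident e v := by
  obtain ⟨e, he, hne⟩ := Finset.exists_ne_zero_of_sum_ne_zero h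
  exact ⟨e, he, by by_contra! hc; simp [not_or.1 hc] at hne⟩

namespace IsTrail

variable {L L₁ L₂ : List (E × Bool)} {u w x : V}

theorem nodup (h : G.IsTrail L u w) : (L.map Prod.fst).Nodup := by
  induction h with
  | nil => exact List.nodup_nil
  | cons s _ hs ih => exact List.nodup_cons.2 ⟨hs, ih⟩

theorem append (h₁ : G.IsTrail L₁ u w) (h₂ : G.IsTrail L₂ w x)
    (hnd : ((L₁ ++ L₂).map Prod.fst).Nodup) : G.IsTrail (L₁ ++ L₂) u x := by
  induction h₁ with
  | nil => exact h₂
  | cons s _ _ ih =>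
    rw [List.cons_append, List.map_cons, List.nodup_cons] at hnd
    exact cons s (ih h₂ hnd.2) hnd.1

theorem split (h : G.IsTrail L u w) (hx : x ∈ u :: L.map G.dst) :
    ∃ L₁ L₂, L = L₁ ++ L₂ ∧ G.IsTrail L₁ u x ∧ G.IsTrail L₂ x w := by
  induction h with
  | nil v =>
    obtain rfl : x = v := by simpa using hx
    exact ⟨[], [], rfl, nil x, nil x⟩
  | cons s ht hs ih =>
    rcases List.mem_cons.1 hx with rfl | hx
    · exact ⟨[], _, rfl, nil _, cons s ht hs⟩
    · obtain ⟨L₁, L₂, rfl, h₁, h₂⟩ := ih (by simpa using hx)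
      exact ⟨s :: L₁, L₂, rfl, cons s h₁ fun h => hs (by simp_all), h₂⟩

theorem rotate (h : G.IsTrail L u u) (hx : x ∈ u :: L.map G.dst) :
    ∃ M, G.IsTrail M x x ∧ M.Perm L := by
  obtain ⟨L₁, L₂, rfl, h₁, h₂⟩ := h.split hx
  have hperm : (L₂ ++ L₁).Perm (L₁ ++ L₂) := List.perm_append_comm
  exact ⟨L₂ ++ L₁, h₂.append h₁ ((hperm.map Prod.fst).nodup_iff.2 h.nodup), hperm⟩

theorem exists_concat (h : G.IsTrail L u w) {e : E} (he : e ∉ L.map Prod.fst)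
    (hw : G.Incident e w) : ∃ b x, G.IsTrail (L ++ [(e, b)]) u x := by
  obtain ⟨b, rfl⟩ := exists_src_eq hw
  refine ⟨b, _, h.append (cons (e, b) (nil _) List.not_mem_nil) ?_⟩
  simp only [List.map_append, List.map_singleton, List.nodup_append, h.nodup, List.nodup_singleton,
    List.mem_singleton, true_and]
  rintro _ ha _ rfl rfl
  exact he ha

theorem src_mem (h : G.IsTrail L u w) {s : E × Bool} (hs : s ∈ L) :
    G.src s ∈ u :: L.map G.dst := by
  induction h with
  | nil => simp at hs
  | cons t _ _ ih =>
    rcases List.mem_cons.1 hs with rfl | hs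
    · exact List.mem_cons_self
    · simpa using Or.inr (ih hs)

theorem ends_mem (h : G.IsTrail L u w) {e : E} (he : e ∈ L.map Prod.fst) :
    (G.ends e).1 ∈ u :: L.map G.dst ∧ (G.ends e).2 ∈ u :: L.map G.dst := by
  obtain ⟨⟨e, b⟩, hs, rfl⟩ := List.mem_map.1 he
  have hsrc := h.src_mem hs
  have hdst : G.dst (e, b) ∈ u :: L.map G.dst := List.mem_cons_of_mem _ (List.mem_map_of_mem hs)
  cases b
  · exact ⟨hdst, hsrc⟩
  · exact ⟨hsrc, hdst⟩

theorem degIn_cast [DecidableEq V] [DecidableEq E] (h : G.IsTrail L u w) (v : V) :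
    (G.degIn (L.map Prod.fst).toFinset v : ZMod 2) =
      (if u = v then 1 else 0) + (if w = v then 1 else 0) := by
  induction h with
  | nil =>
    simp only [degIn, List.map_nil, List.toFinset_nil, Finset.sum_empty, Nat.cast_zero]
    split_ifs <;> decide
  | cons s ht hs ih =>
    rw [List.map_cons, List.toFinset_cons, degIn, Finset.sum_insert (by simpa using hs), ← degIn,
      Nat.cast_add, ih]
    rcases s with ⟨e, _ | _⟩ <;> simp only [src, dst] <;> push_cast <;> split_ifs <;> decide

theorem exists_unused_at_end [Fintype E] [DecidableEq V] [DecidableEq E]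
    (heven : ∀ v, Even (G.degIn univ v)) (h : G.IsTrail L u w) (huw : u ≠ w) :
    ∃ e ∉ L.map Prod.fst, G.Incident e w := by
  set F := (L.map Prod.fst).toFinset
  have hsplit : G.degIn (univ \ F) w + G.degIn F w = G.degIn univ w :=
    Finset.sum_sdiff (Finset.subset_univ F)
  have hrest : G.degIn (univ \ F) w ≠ 0 := by
    intro h0
    have := congrArg (Nat.cast : ℕ → ZMod 2) hsplit
    rw [Nat.cast_add, h0, Nat.cast_zero, zero_add, h.degIn_cast, if_neg huw, if_pos rfl,
      (ZMod.natCast_eq_zero_iff_even).2 (heven w)] at this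
    exact absurd this (by decide)
  obtain ⟨e, he, hinc⟩ := exists_incident_of_degIn_ne_zero hrest
  exact ⟨e, by simpa [F] using (Finset.mem_sdiff.1 he).2, hinc⟩

theorem exists_unused_at_visited [Fintype E] (hconn : ∀ v w : V, G.reach univ v w)
    (h : G.IsTrail L u w) {e₀ : E} (he₀ : e₀ ∉ L.map Prod.fst) :
    ∃ x ∈ u :: L.map G.dst, ∃ e ∉ L.map Prod.fst, G.Incident e x := by
  suffices key : ∀ y, G.reach univ y u →
      (∃ e ∉ L.map Prod.fst, G.Incident e y) →
      ∃ x ∈ u :: L.map G.dst, ∃ e ∉ L.map Prod.fst, G.Incident e x from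
    key _ (hconn _ u) ⟨e₀, he₀, Or.inl rfl⟩
  intro y hy
  induction hy using Relation.ReflTransGen.head_induction_on with
  | refl => exact fun hunused => ⟨u, List.mem_cons_self, hunused⟩
  | @head y c hadj _ ih =>
    intro hunused
    obtain ⟨f, -, hf⟩ := hadj
    by_cases hfL : f ∈ L.map Prod.fst
    · refine ⟨y, ?_, hunused⟩
      rcases hf with hf | hf
      · simpa [hf] using (h.ends_mem hfL).1
      · simpa [hf] using (h.ends_mem hfL).2
    · exact ih ⟨f, hfL, by rcases hf with hf | hf <;> simp [Incident, hf]⟩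

end IsTrail

theorem exists_longest_trail [Fintype E] (v : V) :
    ∃ L u w, G.IsTrail L u w ∧ ∀ L' u' w', G.IsTrail L' u' w' → L'.length ≤ L.length := by
  have hfin : {L : List (E × Bool) | ∃ u w, G.IsTrail L u w}.Finite :=
    (List.finite_length_le (E × Bool) (Fintype.card E)).subset fun L ⟨_, _, h⟩ => by
      simpa using h.nodup.length_le_card
  obtain ⟨L, ⟨u, w, h⟩, hmax⟩ :=
    Set.exists_max_image _ List.length hfin ⟨[], v, v, .nil v⟩
  exact ⟨L, u, w, h, fun L' u' w' h' => hmax L' ⟨u', w', h'⟩⟩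

theorem exists_eulerian_circuit [Fintype E] [DecidableEq V] [DecidableEq E]
    (heven : ∀ v, Even (G.degIn univ v)) (hconn : ∀ v w : V, G.reach univ v w) (v : V) :
    ∃ L u, G.IsTrail L u u ∧ ∀ e, e ∈ L.map Prod.fst := by
  obtain ⟨L, u, w, h, hmax⟩ := G.exists_longest_trail v
  have hstuck : ∀ {M x y}, G.IsTrail M x y → M.length = L.length →
      ∀ e ∉ M.map Prod.fst, ¬(G.Incident e y) := by
    intro M x y hM hlen e he hinc
    obtain ⟨b, z, hM'⟩ := hM.exists_concat he hinc
    have := hmax _ _ _ hM'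
    simp [hlen] at this
  obtain rfl : u = w := by
    by_contra huw
    obtain ⟨e, he, hinc⟩ := h.exists_unused_at_end heven huw
    exact hstuck h rfl e he hinc
  refine ⟨L, u, h, fun e₀ => by_contra fun he₀ => ?_⟩
  obtain ⟨x, hx, e, he, hinc⟩ := h.exists_unused_at_visited hconn he₀
  obtain ⟨M, hM, hperm⟩ := h.rotate hx
  exact hstuck hM hperm.length_eq e (by rwa [(hperm.map Prod.fst).mem_iff]) hinc

end Trails

theorem card_negEdges_insert [DecidableEq E] {G : SignedMultigraph V E} {F : Finset E} {e : E}
    (he : e ∉ F) :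
    (G.negEdges (insert e F)).card = (G.negEdges F).card + if G.neg e then 1 else 0 := by
  rw [negEdges, negEdges, Finset.filter_insert]
  split_ifs <;> simp [Finset.card_insert_of_notMem, he]

section TrailFlow

variable (G : SignedMultigraph V E) [DecidableEq E]

/-- `st` is the direction of the half-edge by which the trail leaves the current vertex; it flips
after each negative edge, so that the half-edges by which the trail enters and leaves a vertex
point in opposite directions. Edges off the trail get an arbitrary admissible orientation. -/
def trailOrient : List (E × Bool) → Bool → E → Bool × Bool
  | [], _ => fun e => (G.neg e, true)
  | s :: L, st =>
    Function.update (trailOrient L (xor st (G.neg s.1))) s.1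
      (if s.2 then (st, !xor st (G.neg s.1)) else (!xor st (G.neg s.1), st))

theorem isOrientation_trailOrient (L : List (E × Bool)) (st : Bool) :
    G.IsOrientation (G.trailOrient L st) := by
  induction L generalizing st with
  | nil => intro e; simp [trailOrient]
  | cons s L ih =>
    obtain ⟨e', b⟩ := s
    intro e
    by_cases he : e = e'
    · subst he
      simp only [trailOrient, Function.update_self]
      cases b <;> cases st <;> cases G.neg e <;> decide
    · simp only [trailOrient, Function.update_of_ne he]
      exact ih _ e

variable [DecidableEq V]

def inflow (d : E → Bool × Bool) (e : E) (v : V) : ℤ :=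
  (if (G.ends e).1 = v then boolSign (d e).1 else 0) +
    (if (G.ends e).2 = v then boolSign (d e).2 else 0)

theorem inflow_trailOrient_cons (s : E × Bool) (L : List (E × Bool)) (st : Bool) (v : V) :
    G.inflow (G.trailOrient (s :: L) st) s.1 v =
      (if G.src s = v then boolSign st else 0) -
        (if G.dst s = v then boolSign (xor st (G.neg s.1)) else 0) := by
  obtain ⟨e, b⟩ := s
  cases b <;> simp only [inflow, trailOrient, Function.update_self, src, dst, boolSign_not,
    Bool.false_eq_true, if_true, if_false, apply_ite Neg.neg, neg_zero, sub_eq_add_neg, add_comm]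

variable {G}

theorem IsTrail.sum_inflow_trailOrient {L : List (E × Bool)} {u w : V} (h : G.IsTrail L u w)
    (st : Bool) (v : V) :
    ∑ e ∈ (L.map Prod.fst).toFinset, G.inflow (G.trailOrient L st) e v =
      (if u = v then boolSign st else 0) -
        (if w = v then (-1) ^ (G.negEdges (L.map Prod.fst).toFinset).card * boolSign st
          else 0) := by
  induction h generalizing st with
  | nil => simp [negEdges]
  | @cons s M w ht hs ih =>
    have hs' : s.1 ∉ (M.map Prod.fst).toFinset := by simpa using hs
    have hrest : ∑ e ∈ (M.map Prod.fst).toFinset, G.inflow (G.trailOrient (s :: M) st) e v =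
        ∑ e ∈ (M.map Prod.fst).toFinset, G.inflow (G.trailOrient M (xor st (G.neg s.1))) e v :=
      Finset.sum_congr rfl fun e he => by
        rw [trailOrient, inflow, inflow, Function.update_of_ne (by rintro rfl; exact hs' he)]
    rw [List.map_cons, List.toFinset_cons, Finset.sum_insert hs', hrest, ih,
      inflow_trailOrient_cons, card_negEdges_insert hs', pow_add]
    cases G.neg s.1 <;>
      simp only [Bool.xor_false, Bool.xor_true, boolSign_not, if_true, if_false,
        Bool.false_eq_true, pow_zero, pow_one] <;>
      split_ifs <;> ring

theorem IsTrail.hasNZkFlow_two [Fintype E] {L : List (E × Bool)} {u : V} (h : G.IsTrail L u u)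
    (hcover : ∀ e, e ∈ L.map Prod.fst) (hneg : Even (G.negEdges univ).card) :
    G.HasNZkFlow 2 := by
  have huniv : (L.map Prod.fst).toFinset = univ := by ext; simp [hcover]
  refine ⟨G.trailOrient L true, 1, ⟨G.isOrientation_trailOrient L true, fun v => ?_⟩,
    fun _ => by norm_num⟩
  have := h.sum_inflow_trailOrient true v
  rw [huniv, hneg.neg_one_pow, one_mul, sub_self] at this
  exact this

end TrailFlow

end SignedMultigraph

open SignedMultigraph in
/-- A connected signed graph has a nowhere-zero 2-flow iff it is Eulerian with an even
number of negative edges. -/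
theorem stmt_6 {V E : Type} [Fintype V] [Fintype E] [DecidableEq V] [DecidableEq E]
    (G : SignedMultigraph V E) (hconn : ∀ v w : V, G.reach Finset.univ v w) :
    G.HasNZkFlow 2 ↔
      (∀ v : V, Even (G.degIn Finset.univ v)) ∧ Even (G.negEdges Finset.univ).card := by
  constructor
  · rintro ⟨d, φ, hflow, hφ⟩
    have hodd : ∀ e, Odd (φ e) := fun e => Int.odd_of_abs_pos_of_abs_lt_two (hφ e).1 (hφ e).2
    exact ⟨hflow.even_degIn hodd, hflow.even_card_negEdges hodd⟩
  · rintro ⟨heven, hneg⟩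
    rcases isEmpty_or_nonempty V with hV | ⟨⟨v⟩⟩
    · exact ⟨G.trailOrient [] true, 1, ⟨G.isOrientation_trailOrient [] true, isEmptyElim⟩,
        fun _ => by norm_num⟩
    · obtain ⟨L, u, h, hcover⟩ := exists_eulerian_circuit heven hconn v
      exact h.hasNZkFlow_two hcover hneg
end

section
/- A signed cubic graph admits a nowhere-zero ℤ₃-flow if and only if it is antibalanced (switching-equivalent to an all-negative signed graph). -/
open Finset

/-!
At a vertex of a cubic graph a nowhere-zero `ℤ₃`-flow has three nonzero inflows summing to `0`,
and in `ℤ₃` this forces them to be equal. An edge is negative exactly when both of its ends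
receive the same inflow (for a positive edge they are `x` and `-x ≠ x`), so switching at the
vertices with inflow `1` makes every edge negative. Conversely, switching preserves nowhere-zero
flows (reverse the half-edges at the switched vertex), and an all-negative cubic graph carries
the flow `1` on introverted edges since `3 = 0` in `ℤ₃`.
-/

lemma ZMod.apply_eq_apply_of_card_eq_three_of_sum_eq_zero {ι : Type} {T : Finset ι}
    {f : ι → ZMod 3} (hT : #T = 3) (hf : ∀ i ∈ T, f i ≠ 0) (hsum : ∑ i ∈ T, f i = 0)
    {i j : ι} (hi : i ∈ T) (hj : j ∈ T) : f i = f j := by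
  classical
  obtain ⟨a, b, c, hab, hac, hbc, rfl⟩ := Finset.card_eq_three.mp hT
  have key : ∀ x y z : ZMod 3,
      x ≠ 0 → y ≠ 0 → z ≠ 0 → x + (y + z) = 0 → x = y ∧ y = z := by
    decide
  rw [Finset.sum_insert (by simp [hab, hac]), Finset.sum_pair hbc] at hsum
  obtain ⟨h₁, h₂⟩ := key _ _ _ (hf a (by simp)) (hf b (by simp)) (hf c (by simp)) hsum
  simp only [Finset.mem_insert, Finset.mem_singleton] at hi hj
  rcases hi with rfl | rfl | rfl <;> rcases hj with rfl | rfl | rfl <;> simp [h₁, h₂]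

namespace SignedMultigraph

/-- The contribution of the half-edge `(e, b)` to `vertexSum` at its endpoint. -/
def halfFlow {E Γ : Type} [AddCommGroup Γ] (d : E → Bool × Bool) (φ : E → Γ)
    (h : E × Bool) : Γ :=
  if (if h.2 then (d h.1).2 else (d h.1).1) then φ h.1 else -φ h.1

lemma halfFlow_ne_zero {E Γ : Type} [AddCommGroup Γ] {d : E → Bool × Bool} {φ : E → Γ}
    {h : E × Bool} (hφ : φ h.1 ≠ 0) : halfFlow d φ h ≠ 0 := by
  unfold halfFlow
  split_ifs <;> simpa using hφ

def endpoint {V E : Type} (G : SignedMultigraph V E) (h : E × Bool) : V :=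
  if h.2 then (G.ends h.1).2 else (G.ends h.1).1

lemma IsOrientation.neg_iff_halfFlow_eq {V E Γ : Type} [AddCommGroup Γ] {G : SignedMultigraph V E}
    {d : E → Bool × Bool} (hd : G.IsOrientation d) {φ : E → Γ} {e : E}
    (hφ : φ e ≠ -φ e) :
    G.neg e = true ↔ halfFlow d φ (e, false) = halfFlow d φ (e, true) := by
  rw [hd e]
  simp only [halfFlow]
  cases (d e).1 <;> cases (d e).2 <;> simp [hφ, Ne.symm hφ]

variable {V E : Type} [DecidableEq V]

lemma degIn_univ_eq_card [Fintype E] (G : SignedMultigraph V E) (v : V) :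
    G.degIn univ v = #{h | G.endpoint h = v} := by
  rw [card_filter, Fintype.sum_prod_type]
  refine sum_congr rfl fun e _ => ?_
  simp only [Fintype.sum_bool]
  simp [endpoint, add_comm]

lemma vertexSum_eq_sum_halfFlow [Fintype E] {Γ : Type} [AddCommGroup Γ]
    (G : SignedMultigraph V E) (d : E → Bool × Bool) (φ : E → Γ) (v : V) :
    G.vertexSum d φ v = ∑ h ∈ {h | G.endpoint h = v}, halfFlow d φ h := by
  rw [sum_filter, Fintype.sum_prod_type]
  refine sum_congr rfl fun e _ => ?_
  simp [endpoint, halfFlow, add_comm]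

lemma IsFlow.halfFlow_eq_of_endpoint_eq [Fintype E] {G : SignedMultigraph V E}
    (hcubic : ∀ v, G.degIn univ v = 3) {d : E → Bool × Bool} {φ : E → ZMod 3}
    (hflow : G.IsFlow d φ) (hφ : ∀ e, φ e ≠ 0) {h h' : E × Bool}
    (hh : G.endpoint h = G.endpoint h') : halfFlow d φ h = halfFlow d φ h' := by
  refine ZMod.apply_eq_apply_of_card_eq_three_of_sum_eq_zero
    (T := {h | G.endpoint h = G.endpoint h'})
    ?_ (fun i _ => halfFlow_ne_zero (hφ i.1)) ?_ (by simpa using hh) (by simp)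
  · rw [← degIn_univ_eq_card, hcubic]
  · rw [← vertexSum_eq_sum_halfFlow, hflow.2]

def switchSet (G : SignedMultigraph V E) (S : Finset V) : SignedMultigraph V E where
  ends := G.ends
  neg e := xor (G.neg e) (xor (decide ((G.ends e).1 ∈ S)) (decide ((G.ends e).2 ∈ S)))

lemma switchSet_empty (G : SignedMultigraph V E) : G.switchSet ∅ = G := by
  simp [switchSet]

lemma switchSet_insert (G : SignedMultigraph V E) {S : Finset V} {a : V} (ha : a ∉ S) :
    G.switchSet (insert a S) = (G.switchSet S).switch a := by
  simp only [switchSet, switch, SignedMultigraph.mk.injEq, true_and]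
  funext e
  by_cases h₁ : (G.ends e).1 = a <;> by_cases h₂ : (G.ends e).2 = a <;>
    simp_all

lemma equivalent_switchSet (G : SignedMultigraph V E) (S : Finset V) :
    G.Equivalent (G.switchSet S) := by
  induction S using Finset.induction_on with
  | empty => rw [switchSet_empty]; exact Relation.ReflTransGen.refl
  | insert a S ha ih => rw [switchSet_insert G ha]; exact ih.tail ⟨a, rfl⟩

lemma antibalanced_of_neg_iff (G : SignedMultigraph V E) (S : Finset V)
    (hS : ∀ e, G.neg e = true ↔ ((G.ends e).1 ∈ S ↔ (G.ends e).2 ∈ S)) :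
    G.Antibalanced := by
  refine ⟨G.switchSet S, G.equivalent_switchSet S, fun e => ?_⟩
  have hSe := hS e
  revert hSe
  simp only [switchSet]
  by_cases h₁ : (G.ends e).1 ∈ S <;> by_cases h₂ : (G.ends e).2 ∈ S <;> cases G.neg e <;>
    simp [h₁, h₂]

lemma antibalanced_of_hasNZGroupFlow_zmod3 [Fintype E] {G : SignedMultigraph V E}
    (hcubic : ∀ v, G.degIn univ v = 3) (hG : G.HasNZGroupFlow (ZMod 3)) :
    G.Antibalanced := by
  obtain ⟨d, φ, hflow, hφ⟩ := hG
  let S : Finset V := image G.endpoint {h | halfFlow d φ h = 1}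
  have hS : ∀ h, G.endpoint h ∈ S ↔ halfFlow d φ h = 1 := fun h =>
    ⟨fun hmem => by
      obtain ⟨h', hh', hend⟩ := mem_image.mp hmem
      exact hflow.halfFlow_eq_of_endpoint_eq hcubic hφ hend.symm ▸ (mem_filter.mp hh').2,
    fun h1 => mem_image_of_mem _ (mem_filter.mpr ⟨mem_univ _, h1⟩)⟩
  refine G.antibalanced_of_neg_iff S fun e => ?_
  have key : ∀ x y : ZMod 3, x ≠ 0 → y ≠ 0 → (x = y ↔ (x = 1 ↔ y = 1)) := by decide
  have hφ_ne_neg : φ e ≠ -φ e := by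
    have : ∀ x : ZMod 3, x ≠ 0 → x ≠ -x := by decide
    exact this _ (hφ e)
  calc G.neg e = true ↔ halfFlow d φ (e, false) = halfFlow d φ (e, true) :=
        hflow.1.neg_iff_halfFlow_eq hφ_ne_neg
    _ ↔ (halfFlow d φ (e, false) = 1 ↔ halfFlow d φ (e, true) = 1) :=
        key _ _ (halfFlow_ne_zero (hφ e)) (halfFlow_ne_zero (hφ e))
    _ ↔ (G.endpoint (e, false) ∈ S ↔ G.endpoint (e, true) ∈ S) := by rw [hS, hS]

lemma switch_switch (G : SignedMultigraph V E) (v : V) : (G.switch v).switch v = G := by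
  obtain ⟨ends, neg⟩ := G
  simp only [switch, SignedMultigraph.mk.injEq, true_and]
  funext e
  by_cases h₁ : (ends e).1 = v <;> by_cases h₂ : (ends e).2 = v <;> simp [h₁, h₂]

def reverseAt (G : SignedMultigraph V E) (v : V) (d : E → Bool × Bool) : E → Bool × Bool :=
  fun e => (xor (d e).1 (decide ((G.ends e).1 = v)), xor (d e).2 (decide ((G.ends e).2 = v)))

lemma halfFlow_reverseAt {Γ : Type} [AddCommGroup Γ] (G : SignedMultigraph V E) (v : V)
    (d : E → Bool × Bool) (φ : E → Γ) (h : E × Bool) :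
    halfFlow (G.reverseAt v d) φ h =
      if G.endpoint h = v then -halfFlow d φ h else halfFlow d φ h := by
  rcases h with ⟨e, _ | _⟩ <;> simp only [reverseAt, halfFlow, endpoint] <;> split_ifs <;>
    simp_all

lemma IsOrientation.switch {G : SignedMultigraph V E} {d : E → Bool × Bool}
    (hd : G.IsOrientation d) (v : V) : (G.switch v).IsOrientation (G.reverseAt v d) := by
  intro e
  have hde := hd e
  revert hde
  simp only [SignedMultigraph.switch, reverseAt]
  cases G.neg e <;> cases (d e).1 <;> cases (d e).2 <;>
    cases decide ((G.ends e).1 = v) <;> cases decide ((G.ends e).2 = v) <;> simp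

lemma IsFlow.switch [Fintype E] {Γ : Type} [AddCommGroup Γ] {G : SignedMultigraph V E}
    {d : E → Bool × Bool} {φ : E → Γ} (hflow : G.IsFlow d φ) (v : V) :
    (G.switch v).IsFlow (G.reverseAt v d) φ := by
  refine ⟨hflow.1.switch v, fun w => ?_⟩
  have hw := hflow.2 w
  rw [vertexSum_eq_sum_halfFlow] at hw ⊢
  change ∑ h ∈ {h | G.endpoint h = w}, halfFlow (G.reverseAt v d) φ h = 0
  by_cases hwv : w = v
  · rw [← neg_eq_zero, ← hw, ← sum_neg_distrib]
    refine sum_congr rfl fun h hh => ?_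
    rw [halfFlow_reverseAt, if_pos ((mem_filter.mp hh).2.trans hwv), neg_neg]
  · rw [← hw]
    refine sum_congr rfl fun h hh => ?_
    rw [halfFlow_reverseAt, if_neg ((mem_filter.mp hh).2 ▸ hwv)]

lemma HasNZGroupFlow.switch [Fintype E] {Γ : Type} [AddCommGroup Γ] {G : SignedMultigraph V E}
    (hG : G.HasNZGroupFlow Γ) (v : V) : (G.switch v).HasNZGroupFlow Γ :=
  let ⟨_, φ, hflow, hφ⟩ := hG
  ⟨_, φ, hflow.switch v, hφ⟩

lemma Equivalent.ends_eq {G G' : SignedMultigraph V E} (h : G.Equivalent G') :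
    G'.ends = G.ends := by
  induction h with
  | refl => rfl
  | tail _ hstep ih => obtain ⟨v, rfl⟩ := hstep; exact ih

lemma Equivalent.hasNZGroupFlow [Fintype E] {Γ : Type} [AddCommGroup Γ]
    {G G' : SignedMultigraph V E} (h : G.Equivalent G') (hG' : G'.HasNZGroupFlow Γ) :
    G.HasNZGroupFlow Γ := by
  induction h with
  | refl => exact hG'
  | tail _ hstep ih =>
    obtain ⟨v, rfl⟩ := hstep
    have hG := hG'.switch v
    rw [switch_switch] at hG
    exact ih hG

lemma hasNZGroupFlow_of_forall_neg [Fintype E] {R : Type} [Ring R] [Nontrivial R]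
    {G : SignedMultigraph V E} (hneg : ∀ e, G.neg e = true)
    (hdeg : ∀ v, (G.degIn univ v : R) = 0) : G.HasNZGroupFlow R := by
  refine ⟨fun _ => (true, true), fun _ => 1, ⟨fun e => by simp [hneg e], fun v => ?_⟩,
    fun _ => one_ne_zero⟩
  rw [vertexSum_eq_sum_halfFlow, ← hdeg v, degIn_univ_eq_card]
  simp [halfFlow]

lemma Antibalanced.hasNZGroupFlow_zmod3 [Fintype E] {G : SignedMultigraph V E}
    (hcubic : ∀ v, G.degIn univ v = 3) (hG : G.Antibalanced) : G.HasNZGroupFlow (ZMod 3) := by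
  obtain ⟨G', hequiv, hneg⟩ := hG
  refine hequiv.hasNZGroupFlow (hasNZGroupFlow_of_forall_neg hneg fun v => ?_)
  rw [show G'.degIn univ v = G.degIn univ v by simp only [degIn, hequiv.ends_eq], hcubic]
  rfl

end SignedMultigraph

open SignedMultigraph in
theorem stmt_9_general {V E : Type} [Fintype E] [DecidableEq V]
    (G : SignedMultigraph V E) (hcubic : ∀ v : V, G.degIn Finset.univ v = 3) :
    G.HasNZGroupFlow (ZMod 3) ↔ G.Antibalanced :=
  ⟨antibalanced_of_hasNZGroupFlow_zmod3 hcubic, fun h => h.hasNZGroupFlow_zmod3 hcubic⟩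

open SignedMultigraph in
/-- A signed cubic graph has a nowhere-zero `ℤ₃`-flow iff it is antibalanced. -/
theorem stmt_9 {V E : Type} [Fintype V] [Fintype E] [DecidableEq V] [DecidableEq E]
    (G : SignedMultigraph V E) (hcubic : ∀ v : V, G.degIn Finset.univ v = 3) :
    G.HasNZGroupFlow (ZMod 3) ↔ G.Antibalanced :=
  stmt_9_general G hcubic
end

section
/- If a signed graph has exactly 2k+1 negative edges (and is flow-admissible), then its circular flow number is at least 2 + 1/k. -/
open Finset

section AuxZhu

open SignedMultigraph

variable {V E : Type} [Fintype V] [Fintype E] [DecidableEq V] [DecidableEq E]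

lemma aux_sum_vertexSum (G : SignedMultigraph V E) (d : E → Bool × Bool) (φ : E → ℝ) :
    ∑ v, G.vertexSum d φ v
      = ∑ e, ((if (d e).1 then φ e else -φ e) + (if (d e).2 then φ e else -φ e)) := by
  unfold SignedMultigraph.vertexSum
  rw [Finset.sum_comm]
  refine Finset.sum_congr rfl fun e _ => ?_
  rw [Finset.sum_add_distrib, Finset.sum_ite_eq, Finset.sum_ite_eq]
  simp

lemma aux_neg_sum (G : SignedMultigraph V E) (d : E → Bool × Bool) (φ : E → ℝ)
    (h : G.IsFlow d φ) :
    ∑ e ∈ Finset.univ.filter (fun e => G.neg e = true),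
      (if (d e).1 then φ e else -φ e) = 0 := by
  have h0 : ∑ e, ((if (d e).1 then φ e else -φ e) + (if (d e).2 then φ e else -φ e)) = 0 := by
    rw [← aux_sum_vertexSum G d φ]
    simp [h.2]
  rw [← Finset.sum_filter_add_sum_filter_not Finset.univ (fun e => G.neg e = true)
    (fun e => ((if (d e).1 then φ e else -φ e) + (if (d e).2 then φ e else -φ e)))] at h0
  have hpos : ∑ e ∈ Finset.univ.filter (fun e => ¬ G.neg e = true),
      ((if (d e).1 then φ e else -φ e) + (if (d e).2 then φ e else -φ e)) = 0 := by
    refine Finset.sum_eq_zero fun e he => ?_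
    have hne : ¬ ((d e).1 = (d e).2) := fun hd =>
      (Finset.mem_filter.mp he).2 ((h.1 e).mpr hd)
    cases h1 : (d e).1 <;> cases h2 : (d e).2 <;> simp_all <;> ring
  rw [hpos, add_zero] at h0
  have hneg : ∑ e ∈ Finset.univ.filter (fun e => G.neg e = true),
      ((if (d e).1 then φ e else -φ e) + (if (d e).2 then φ e else -φ e))
      = 2 * ∑ e ∈ Finset.univ.filter (fun e => G.neg e = true),
          (if (d e).1 then φ e else -φ e) := by
    rw [Finset.mul_sum]
    refine Finset.sum_congr rfl fun e he => ?_
    have hd : (d e).1 = (d e).2 := (h.1 e).mp (Finset.mem_filter.mp he).2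
    rw [← hd]; ring
  rw [hneg] at h0
  linarith

lemma aux_tflow_bound (G : SignedMultigraph V E) (k : ℕ) (hk : 0 < k)
    (hcard : (Finset.univ.filter (fun e => G.neg e = true)).card = 2 * k + 1)
    (t : ℝ) (ht : G.HasCircularFlow t) : 2 + 1 / (k : ℝ) ≤ t := by
  obtain ⟨d, φ, hf, hb⟩ := ht
  set N := Finset.univ.filter (fun e => G.neg e = true) with hN
  set s : E → ℝ := fun e => if (d e).1 then φ e else -φ e with hs
  have habs : ∀ e, |s e| = |φ e| := by
    intro e; by_cases h : (d e).1 <;> simp [hs, h, abs_neg]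
  have hsum : ∑ e ∈ N, s e = 0 := aux_neg_sum G d φ hf
  have hNne : N.Nonempty := Finset.card_pos.mp (by rw [hcard]; omega)
  obtain ⟨e0, _⟩ := hNne
  have ht1 : (1 : ℝ) ≤ t - 1 := le_trans (hb e0).1 (hb e0).2
  set P := N.filter (fun e => 0 < s e) with hP
  set Q := N.filter (fun e => ¬ 0 < s e) with hQ
  have hPQ : P.card + Q.card = 2 * k + 1 := by
    rw [hP, hQ, Finset.card_filter_add_card_filter_not, hcard]
  set A := ∑ e ∈ P, s e with hA
  have hsplit : ∑ e ∈ P, s e + ∑ e ∈ Q, s e = 0 := by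
    rw [hP, hQ, Finset.sum_filter_add_sum_filter_not]; exact hsum
  have hAQ : ∑ e ∈ Q, (-s e) = A := by
    rw [Finset.sum_neg_distrib]; linarith
  have hP_lo : (P.card : ℝ) ≤ A := by
    have := Finset.card_nsmul_le_sum P s 1 (fun e he => by
      have h1 : 1 ≤ |s e| := (habs e) ▸ (hb e).1
      have h2 : 0 < s e := (Finset.mem_filter.mp he).2
      rw [abs_of_pos h2] at h1; exact h1)
    simpa using this
  have hP_hi : A ≤ (P.card : ℝ) * (t - 1) := by
    have := Finset.sum_le_card_nsmul P s (t - 1) (fun e he => by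
      have h1 : |s e| ≤ t - 1 := (habs e) ▸ (hb e).2
      exact le_trans (le_abs_self _) h1)
    simpa using this
  have hQ_lo : (Q.card : ℝ) ≤ A := by
    rw [← hAQ]
    have := Finset.card_nsmul_le_sum Q (fun e => -s e) 1 (fun e he => by
      have h1 : 1 ≤ |s e| := (habs e) ▸ (hb e).1
      have h2 : ¬ 0 < s e := (Finset.mem_filter.mp he).2
      have h3 : s e ≤ 0 := le_of_not_gt h2
      rw [abs_of_nonpos h3] at h1; exact h1)
    simpa using this
  have hQ_hi : A ≤ (Q.card : ℝ) * (t - 1) := by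
    rw [← hAQ]
    have := Finset.sum_le_card_nsmul Q (fun e => -s e) (t - 1) (fun e he => by
      have h1 : |s e| ≤ t - 1 := (habs e) ▸ (hb e).2
      exact le_trans (neg_le_abs _) h1)
    simpa using this
  have hk' : (0 : ℝ) < (k : ℝ) := by exact_mod_cast hk
  have hkey : (k : ℝ) + 1 ≤ (k : ℝ) * (t - 1) := by
    rcases le_or_gt P.card k with hle | hlt
    · have h1 : k + 1 ≤ Q.card := by omega
      have h1' : (k : ℝ) + 1 ≤ (Q.card : ℝ) := by exact_mod_cast h1
      have h2 : (P.card : ℝ) * (t - 1) ≤ (k : ℝ) * (t - 1) := by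
        apply mul_le_mul_of_nonneg_right _ (by linarith)
        exact_mod_cast hle
      linarith
    · have hle : Q.card ≤ k := by omega
      have h1 : k + 1 ≤ P.card := by omega
      have h1' : (k : ℝ) + 1 ≤ (P.card : ℝ) := by exact_mod_cast h1
      have h2 : (Q.card : ℝ) * (t - 1) ≤ (k : ℝ) * (t - 1) := by
        apply mul_le_mul_of_nonneg_right _ (by linarith)
        exact_mod_cast hle
      linarith
  have h2 : 1 / (k : ℝ) ≤ t - 2 := by
    rw [div_le_iff₀ hk']
    nlinarith
  linarith

lemma aux_nonempty (G : SignedMultigraph V E) (hadm : G.FlowAdmissible) :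
    {t : ℝ | G.HasCircularFlow t}.Nonempty := by
  obtain ⟨d, φ, hf, hz⟩ := hadm
  set M : ℕ := Finset.univ.sup (fun e => (φ e).natAbs) with hM
  refine ⟨(M : ℝ) + 1, d, fun e => ((φ e : ℤ) : ℝ), ⟨hf.1, ?_⟩, ?_⟩
  · intro v
    have h0 : ((G.vertexSum d φ v : ℤ) : ℝ) = 0 := by rw [hf.2 v]; norm_num
    unfold SignedMultigraph.vertexSum at h0 ⊢
    push_cast at h0
    convert h0 using 1
  · intro e
    constructor
    · rw [← Int.cast_abs]
      exact_mod_cast Int.one_le_abs (hz e)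
    · have hle : (φ e).natAbs ≤ M := Finset.le_sup (f := fun e => (φ e).natAbs) (Finset.mem_univ e)
      rw [show ((M : ℝ) + 1 - 1) = (M : ℝ) by ring, ← Int.cast_abs, Int.abs_eq_natAbs]
      exact_mod_cast hle

end AuxZhu

open SignedMultigraph in
/-- Zhu: a flow-admissible signed graph with exactly `2k+1` negative edges has circular
flow number at least `2 + 1/k`. -/
theorem stmt_14 {V E : Type} [Fintype V] [Fintype E] [DecidableEq V] [DecidableEq E]
    (G : SignedMultigraph V E) (k : ℕ) (hk : 0 < k)
    (hcard : (Finset.univ.filter (fun e => G.neg e = true)).card = 2 * k + 1)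
    (hadm : G.FlowAdmissible) :
    2 + 1 / (k : ℝ) ≤ G.circFlowNum := by
  exact le_csInf (aux_nonempty G hadm) (fun t ht => aux_tflow_bound G k hk hcard t ht)
end

section
/- Every r-regular graph with r ≡ 0 (mod 4) admits a zero-sum 2-flow, i.e., an assignment of values ±1 to its edges such that at every vertex the sum of the values of incident edges is zero. -/
open Finset

namespace ZSAux

variable {V E : Type} [Fintype V] [Fintype E] [DecidableEq V] [DecidableEq E]

def degIn (G : E → V × V) (F : Finset E) (v : V) : ℕ :=
  ∑ e ∈ F, ((if (G e).1 = v then 1 else 0) + (if (G e).2 = v then 1 else 0))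

def tl (G : E → V × V) (e : E) (b : Bool) : V := if b then (G e).1 else (G e).2
def hd (G : E → V × V) (e : E) (b : Bool) : V := if b then (G e).2 else (G e).1

def oc (G : E → V × V) (S : Finset E) (d : E → Bool) (v : V) : ℕ :=
  ∑ e ∈ S, if tl G e (d e) = v then 1 else 0
def ic (G : E → V × V) (S : Finset E) (d : E → Bool) (v : V) : ℕ :=
  ∑ e ∈ S, if hd G e (d e) = v then 1 else 0

lemma ind_eq (G : E → V × V) (e : E) (b : Bool) (v : V) :
    ((if tl G e b = v then 1 else 0) + (if hd G e b = v then 1 else 0) : ℕ)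
      = (if (G e).1 = v then 1 else 0) + (if (G e).2 = v then 1 else 0) := by
  cases b <;> simp [tl, hd, Nat.add_comm]

lemma degIn_eq (G : E → V × V) (S : Finset E) (d : E → Bool) (v : V) :
    degIn G S v = oc G S d v + ic G S d v := by
  unfold degIn oc ic
  rw [← Finset.sum_add_distrib]
  exact Finset.sum_congr rfl fun e _ => (ind_eq G e (d e) v).symm

lemma degIn_sdiff (G : E → V × V) {S F : Finset E} (h : S ⊆ F) (v : V) :
    degIn G F v = degIn G (F \ S) v + degIn G S v := by
  unfold degIn; exact (Finset.sum_sdiff h).symm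

lemma oc_congr (G : E → V × V) {S : Finset E} {d d' : E → Bool}
    (h : ∀ e ∈ S, d e = d' e) (v : V) : oc G S d v = oc G S d' v :=
  Finset.sum_congr rfl fun e he => by rw [h e he]

lemma ic_congr (G : E → V × V) {S : Finset E} {d d' : E → Bool}
    (h : ∀ e ∈ S, d e = d' e) (v : V) : ic G S d v = ic G S d' v :=
  Finset.sum_congr rfl fun e he => by rw [h e he]

lemma oc_sdiff (G : E → V × V) {S F : Finset E} (h : S ⊆ F) (d : E → Bool) (v : V) :
    oc G F d v = oc G (F \ S) d v + oc G S d v := by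
  unfold oc; exact (Finset.sum_sdiff h).symm

lemma ic_sdiff (G : E → V × V) {S F : Finset E} (h : S ⊆ F) (d : E → Bool) (v : V) :
    ic G F d v = ic G (F \ S) d v + ic G S d v := by
  unfold ic; exact (Finset.sum_sdiff h).symm

lemma walk (G : E → V × V) (F : Finset E) (hev : ∀ v, Even (degIn G F v)) :
    ∀ (n : ℕ) (S : Finset E) (d : E → Bool) (u w : V),
      S ⊆ F → S.Nonempty →
      (∀ v, (oc G S d v : ℤ) - ic G S d v
          = (if u = v then 1 else 0) - (if w = v then 1 else 0)) →
      F.card - S.card ≤ n →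
      ∃ S' : Finset E, ∃ d' : E → Bool, S' ⊆ F ∧ S'.Nonempty ∧
        ∀ v, oc G S' d' v = ic G S' d' v := by
  intro n
  induction n with
  | zero =>
    intro S d u w hSF hSne hbal hcard
    by_cases huw : u = w
    · subst huw
      refine ⟨S, d, hSF, hSne, fun v => ?_⟩
      have := hbal v
      omega
    · exfalso
      -- degIn of S at w is odd, degIn of F at w even, so there is an unused edge at w,
      -- hence S ⊊ F, contradicting card bound
      have h1 := hbal w
      rw [if_neg huw, if_pos rfl] at h1
      have h2 := degIn_eq G S d w
      have h3 := degIn_sdiff G hSF w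
      have h4 := (Nat.even_iff).mp (hev w)
      have h5 : degIn G (F \ S) w ≠ 0 := by omega
      have h6 : (F \ S).Nonempty := by
        rw [Finset.nonempty_iff_ne_empty]
        intro hh
        apply h5
        unfold degIn
        rw [hh, Finset.sum_empty]
      obtain ⟨e, he⟩ := h6
      have hcards : S.card < F.card := by
        apply Finset.card_lt_card
        rw [Finset.mem_sdiff] at he
        exact ⟨hSF, fun hsub => he.2 (hsub he.1)⟩
      omega
  | succ n ih =>
    intro S d u w hSF hSne hbal hcard
    by_cases huw : u = w
    · subst huw
      refine ⟨S, d, hSF, hSne, fun v => ?_⟩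
      have := hbal v
      omega
    · have h1 := hbal w
      rw [if_neg huw, if_pos rfl] at h1
      have h2 := degIn_eq G S d w
      have h3 := degIn_sdiff G hSF w
      have h4 := (Nat.even_iff).mp (hev w)
      have h5 : degIn G (F \ S) w ≠ 0 := by omega
      have h6 : ∃ e ∈ F \ S, (G e).1 = w ∨ (G e).2 = w := by
        by_contra hno
        push_neg at hno
        apply h5
        unfold degIn
        apply Finset.sum_eq_zero
        intro e he
        have := hno e he
        rw [if_neg this.1, if_neg this.2]
        rfl
      obtain ⟨e, he, hew⟩ := h6
      rw [Finset.mem_sdiff] at he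
      set b : Bool := decide ((G e).1 = w) with hb
      have htl : tl G e b = w := by
        by_cases hc : (G e).1 = w
        · simp [tl, hb, hc]
        · have : (G e).2 = w := hew.resolve_left hc
          simp [tl, hb, hc, this]
      refine ih (insert e S) (Function.update d e b) u (hd G e b) ?_ ?_ ?_ ?_
      · exact Finset.insert_subset he.1 hSF
      · exact Finset.insert_nonempty e S
      · intro v
        have hne' : ∀ e' ∈ S, Function.update d e b e' = d e' := fun e' he' =>
          Function.update_of_ne (show e' ≠ e from fun h => he.2 (h ▸ he')) b d
        have hocS : oc G S (Function.update d e b) v = oc G S d v :=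
          oc_congr G hne' v
        have hicS : ic G S (Function.update d e b) v = ic G S d v :=
          ic_congr G hne' v
        have hoc : oc G (insert e S) (Function.update d e b) v
            = (if w = v then 1 else 0) + oc G S d v := by
          unfold oc
          rw [Finset.sum_insert he.2, Function.update_self, htl]
          unfold oc at hocS
          rw [hocS]
        have hic : ic G (insert e S) (Function.update d e b) v
            = (if hd G e b = v then 1 else 0) + ic G S d v := by
          unfold ic
          rw [Finset.sum_insert he.2, Function.update_self]
          unfold ic at hicS
          rw [hicS]
        rw [hoc, hic]
        have := hbal v
        push_cast
        push_cast at this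
        linarith
      · have : (insert e S).card = S.card + 1 := Finset.card_insert_of_notMem he.2
        omega

lemma orient (G : E → V × V) : ∀ (F : Finset E), (∀ v, Even (degIn G F v)) →
    ∃ d : E → Bool, ∀ v, oc G F d v = ic G F d v := by
  intro F
  induction F using Finset.strongInduction with
  | _ F ihs =>
    intro hev
    rcases F.eq_empty_or_nonempty with rfl | ⟨e₀, he₀⟩
    · exact ⟨fun _ => true, fun v => by simp [oc, ic]⟩
    · obtain ⟨S, d₁, hSF, hSne, hbal⟩ :=
        walk G F hev F.card {e₀} (fun _ => true) (tl G e₀ true) (hd G e₀ true)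
          (Finset.singleton_subset_iff.mpr he₀) (Finset.singleton_nonempty e₀)
          (fun v => by
            unfold oc ic
            rw [Finset.sum_singleton, Finset.sum_singleton]
            by_cases h1 : tl G e₀ true = v <;>
              by_cases h2 : hd G e₀ true = v <;> simp [h1, h2])
          (by omega)
      have hevS : ∀ v, Even (degIn G (F \ S) v) := by
        intro v
        have h2 := degIn_eq G S d₁ v
        have h3 := degIn_sdiff G hSF v
        have h4 := (Nat.even_iff).mp (hev v)
        have h5 := hbal v
        rw [Nat.even_iff]
        omega
      obtain ⟨d₂, hd₂⟩ := ihs (F \ S)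
        (Finset.sdiff_ssubset hSF hSne) hevS
      refine ⟨fun e => if e ∈ S then d₁ e else d₂ e, fun v => ?_⟩
      set d : E → Bool := fun e => if e ∈ S then d₁ e else d₂ e with hdd
      have hcS : ∀ e ∈ S, d e = d₁ e := fun e he => by simp [hdd, he]
      have hcD : ∀ e ∈ F \ S, d e = d₂ e := fun e he => by
        rw [Finset.mem_sdiff] at he; simp [hdd, he.2]
      rw [oc_sdiff G hSF d v, ic_sdiff G hSF d v,
        oc_congr G hcS v, ic_congr G hcS v, oc_congr G hcD v, ic_congr G hcD v,
        hbal v, hd₂ v]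


lemma count_filter (F : Finset E) (g : E → V) (B : Finset V) :
    ∑ v ∈ B, (∑ e ∈ F, if g e = v then 1 else 0) = (F.filter fun e => g e ∈ B).card := by
  rw [Finset.sum_comm, Finset.card_filter]
  refine Finset.sum_congr rfl fun e _ => ?_
  rw [Finset.sum_ite_eq B (g e) (fun _ => 1)]

lemma twofactor (G : E → V × V) (F : Finset E) (m : ℕ) (hm : 1 ≤ m)
    (hdeg : ∀ v, degIn G F v = 2 * m) :
    ∃ S : Finset E, S ⊆ F ∧ ∀ v, degIn G S v = 2 := by
  obtain ⟨d, hbal⟩ := orient G F (fun v => by rw [hdeg]; exact ⟨m, two_mul m⟩)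
  have hoc : ∀ v, oc G F d v = m := by
    intro v
    have h1 := degIn_eq G F d v
    have h2 := hbal v
    have h3 := hdeg v
    omega
  have hic : ∀ v, ic G F d v = m := fun v => by rw [← hbal v]; exact hoc v
  set t : V → Finset V :=
    fun v => (F.filter fun e => tl G e (d e) = v).image (fun e => hd G e (d e)) with ht
  have hall : ∀ A : Finset V, A.card ≤ (A.biUnion t).card := by
    intro A
    have h1 : m * A.card = (F.filter fun e => tl G e (d e) ∈ A).card := by
      rw [← count_filter F (fun e => tl G e (d e)) A]
      calc m * A.card = ∑ _v ∈ A, m := by rw [Finset.sum_const, smul_eq_mul, Nat.mul_comm]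
        _ = ∑ v ∈ A, oc G F d v := Finset.sum_congr rfl fun v _ => (hoc v).symm
        _ = _ := rfl
    have h3 : m * (A.biUnion t).card
        = (F.filter fun e => hd G e (d e) ∈ A.biUnion t).card := by
      rw [← count_filter F (fun e => hd G e (d e)) (A.biUnion t)]
      calc m * (A.biUnion t).card = ∑ _v ∈ A.biUnion t, m := by
            rw [Finset.sum_const, smul_eq_mul, Nat.mul_comm]
        _ = ∑ v ∈ A.biUnion t, ic G F d v := Finset.sum_congr rfl fun v _ => (hic v).symm
        _ = _ := rfl
    have h2 : (F.filter fun e => tl G e (d e) ∈ A)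
        ⊆ F.filter fun e => hd G e (d e) ∈ A.biUnion t := by
      intro e he
      rw [Finset.mem_filter] at he ⊢
      refine ⟨he.1, Finset.mem_biUnion.mpr ⟨tl G e (d e), he.2, ?_⟩⟩
      rw [ht]
      exact Finset.mem_image.mpr ⟨e, Finset.mem_filter.mpr ⟨he.1, rfl⟩, rfl⟩
    have := Finset.card_le_card h2
    have : m * A.card ≤ m * (A.biUnion t).card := by omega
    exact Nat.le_of_mul_le_mul_left this hm
  obtain ⟨f, finj, hf⟩ := (Finset.all_card_le_biUnion_card_iff_exists_injective t).mp hall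
  have fbij : Function.Bijective f := Finite.injective_iff_bijective.mp finj
  have hch : ∀ v, ∃ e, e ∈ F ∧ tl G e (d e) = v ∧ hd G e (d e) = f v := by
    intro v
    have := hf v
    rw [ht] at this
    obtain ⟨e, he, hee⟩ := Finset.mem_image.mp this
    rw [Finset.mem_filter] at he
    exact ⟨e, he.1, he.2, hee⟩
  choose g hg1 hg2 hg3 using hch
  have ginj : Function.Injective g := fun a b hab => by rw [← hg2 a, ← hg2 b, hab]
  refine ⟨Finset.univ.image g, ?_, ?_⟩
  · intro e he
    obtain ⟨x, -, rfl⟩ := Finset.mem_image.mp he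
    exact hg1 x
  · intro v
    unfold degIn
    rw [Finset.sum_image (fun a _ b _ hab => ginj hab)]
    have hterm : ∀ x : V,
        ((if (G (g x)).1 = v then 1 else 0) + (if (G (g x)).2 = v then 1 else 0) : ℕ)
          = (if x = v then 1 else 0) + (if f x = v then 1 else 0) := by
      intro x
      rw [← ind_eq G (g x) (d (g x)) v, hg2 x, hg3 x]
    rw [Finset.sum_congr rfl (fun x _ => hterm x), Finset.sum_add_distrib]
    have e1 : ∑ x : V, (if x = v then 1 else 0 : ℕ) = 1 := by simp
    have e2 : ∑ x : V, (if f x = v then 1 else 0 : ℕ) = 1 := by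
      rw [Fintype.sum_bijective f fbij _ (fun y => if y = v then 1 else 0) (fun x => rfl)]
      simp
    rw [e1, e2]

def wsum (G : E → V × V) (F : Finset E) (f : E → ℤ) (v : V) : ℤ :=
  ∑ e ∈ F, ((if (G e).1 = v then f e else 0) + (if (G e).2 = v then f e else 0))

lemma wsum_sdiff (G : E → V × V) {S F : Finset E} (h : S ⊆ F) (f : E → ℤ) (v : V) :
    wsum G F f v = wsum G (F \ S) f v + wsum G S f v := by
  unfold wsum; exact (Finset.sum_sdiff h).symm

lemma wsum_congr (G : E → V × V) {S : Finset E} {f f' : E → ℤ}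
    (h : ∀ e ∈ S, f e = f' e) (v : V) : wsum G S f v = wsum G S f' v :=
  Finset.sum_congr rfl fun e he => by rw [h e he]

lemma wsum_one (G : E → V × V) {S : Finset E} {f : E → ℤ} (h : ∀ e ∈ S, f e = 1) (v : V) :
    wsum G S f v = (degIn G S v : ℤ) := by
  unfold wsum degIn
  push_cast
  refine Finset.sum_congr rfl fun e he => ?_
  rw [h e he]

lemma wsum_negone (G : E → V × V) {S : Finset E} {f : E → ℤ} (h : ∀ e ∈ S, f e = -1) (v : V) :
    wsum G S f v = -(degIn G S v : ℤ) := by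
  unfold wsum degIn
  push_cast
  rw [← Finset.sum_neg_distrib]
  refine Finset.sum_congr rfl fun e he => ?_
  rw [h e he]
  rw [neg_add]
  congr 1 <;> split <;> simp

lemma main (G : E → V × V) : ∀ (n : ℕ) (F : Finset E), (∀ v, degIn G F v = 4 * n) →
    ∃ f : E → ℤ, (∀ e ∈ F, f e = 1 ∨ f e = -1) ∧ ∀ v, wsum G F f v = 0 := by
  intro n
  induction n with
  | zero =>
    intro F hdeg
    have hF : F = ∅ := by
      rw [Finset.eq_empty_iff_forall_notMem]
      intro e he
      have h := hdeg (G e).1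
      rw [Nat.mul_zero] at h
      unfold degIn at h
      rw [Finset.sum_eq_zero_iff] at h
      have := h e he
      simp at this
    subst hF
    exact ⟨fun _ => 1, fun e he => absurd he (Finset.notMem_empty e),
      fun v => by unfold wsum; rw [Finset.sum_empty]⟩
  | succ n ih =>
    intro F hdeg
    obtain ⟨S₁, hS₁F, hS₁deg⟩ := twofactor G F (2 * n + 2) (by omega)
      (fun v => by rw [hdeg v]; ring)
    have hdeg₂ : ∀ v, degIn G (F \ S₁) v = 2 * (2 * n + 1) := by
      intro v
      have := degIn_sdiff G hS₁F v
      have := hdeg v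
      have := hS₁deg v
      omega
    obtain ⟨S₂, hS₂F, hS₂deg⟩ := twofactor G (F \ S₁) (2 * n + 1) (by omega) hdeg₂
    have hdeg₃ : ∀ v, degIn G ((F \ S₁) \ S₂) v = 4 * n := by
      intro v
      have := degIn_sdiff G hS₂F v
      have := hdeg₂ v
      have := hS₂deg v
      omega
    obtain ⟨f₃, hf₃mem, hf₃sum⟩ := ih ((F \ S₁) \ S₂) hdeg₃
    set f : E → ℤ := fun e => if e ∈ S₁ then 1 else if e ∈ S₂ then -1 else f₃ e with hf
    have hS₂notS₁ : ∀ e ∈ S₂, e ∉ S₁ := by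
      intro e he
      exact (Finset.mem_sdiff.mp (hS₂F he)).2
    refine ⟨f, ?_, ?_⟩
    · intro e he
      by_cases h1 : e ∈ S₁
      · left; simp [hf, h1]
      · by_cases h2 : e ∈ S₂
        · right; simp [hf, h1, h2]
        · have : e ∈ (F \ S₁) \ S₂ := by
            rw [Finset.mem_sdiff, Finset.mem_sdiff]
            exact ⟨⟨he, h1⟩, h2⟩
          have := hf₃mem e this
          simpa [hf, h1, h2] using this
    · intro v
      rw [wsum_sdiff G hS₁F f v, wsum_sdiff G hS₂F f v]
      have w1 : wsum G S₁ f v = 2 := by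
        rw [wsum_one G (fun e he => by simp [hf, he]) v, hS₁deg v]
        norm_num
      have w2 : wsum G S₂ f v = -2 := by
        rw [wsum_negone G (fun e he => by simp [hf, hS₂notS₁ e he, he]) v, hS₂deg v]
        norm_num
      have w3 : wsum G ((F \ S₁) \ S₂) f v = 0 := by
        rw [wsum_congr G (f' := f₃) (fun e he => by
          rw [Finset.mem_sdiff, Finset.mem_sdiff] at he
          simp [hf, he.1.2, he.2]) v]
        exact hf₃sum v
      rw [w1, w2, w3]
      ring

end ZSAux

open SignedMultigraph in
/-- Wang–Hu: every `r`-regular graph with `r ≡ 0 (mod 4)` has a zero-sum 2-flow. -/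
theorem stmt_16 {V E : Type} [Fintype V] [Fintype E] [DecidableEq V] [DecidableEq E]
    (G : SignedMultigraph V E) (r : ℕ) (hr : r % 4 = 0)
    (hreg : ∀ v : V, G.degIn Finset.univ v = r) :
    G.ZeroSumFlow 2 := by
  obtain ⟨n, hn⟩ : ∃ n, r = 4 * n :=
    ⟨r / 4, (Nat.mul_div_cancel' (Nat.dvd_of_mod_eq_zero hr)).symm⟩
  obtain ⟨f, hmem, hsum⟩ := ZSAux.main G.ends n Finset.univ
    (fun v => by have h := hreg v; rw [hn] at h; exact h)
  refine ⟨f, fun e => ?_, fun v => hsum v⟩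
  rcases hmem e (Finset.mem_univ e) with h | h <;> rw [h] <;> norm_num
end

section
/- Every r-regular graph with r ≥ 3 odd that has a perfect matching admits a zero-sum 3-flow (an assignment of values in {±1, ±2} to edges with zero sum of values of incident edges at every vertex). -/
open Finset

/-! Removing the perfect matching leaves a `2k`-regular graph. By Petersen's theorem (an Euler
orientation, then Hall's theorem for the out/in-copies of the vertices) it has a `2`-factor, and
peeling `2`-factors off one at a time and labelling them alternately `1` and `-1` gives each vertex
the sum `2` when `k` is odd. When `k` is even, one `2`-factor is labelled `2` and such a labelling
of the rest is negated. The matching edges then receive `-2`. -/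

namespace SignedMultigraph

variable {V E : Type}

def IsReorientation (G : SignedMultigraph V E) (o : E → V × V) : Prop :=
  ∀ e, o e = G.ends e ∨ o e = (G.ends e).swap

lemma IsReorientation.update [DecidableEq E] {G : SignedMultigraph V E} {o : E → V × V}
    (ho : G.IsReorientation o) {e : E} {p : V × V} (hp : p = G.ends e ∨ p = (G.ends e).swap) :
    G.IsReorientation (Function.update o e p) := fun e' => by
  rcases eq_or_ne e' e with rfl | hne
  · rwa [Function.update_self]
  · rw [Function.update_of_ne hne]; exact ho e'

variable [DecidableEq V]

def outDeg (o : E → V × V) (F : Finset E) (v : V) : ℕ := #{e ∈ F | (o e).1 = v}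

def inDeg (o : E → V × V) (F : Finset E) (v : V) : ℕ := #{e ∈ F | (o e).2 = v}

/-- Sending one unit along every edge of `F`, in the direction given by `o`, is a flow of value
one from `a` to `b` (of value zero if `a = b`). -/
def IsUnitFlow (o : E → V × V) (F : Finset E) (a b : V) : Prop :=
  ∀ v, outDeg o F v + (if v = b then 1 else 0) = inDeg o F v + (if v = a then 1 else 0)

lemma IsReorientation.outDeg_add_inDeg {G : SignedMultigraph V E} {o : E → V × V}
    (ho : G.IsReorientation o) (F : Finset E) (v : V) :
    outDeg o F v + inDeg o F v = G.degIn F v := by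
  rw [outDeg, inDeg, card_filter, card_filter, ← sum_add_distrib]
  refine sum_congr rfl fun e _ => ?_
  rcases ho e with h | h <;> simp only [h, Prod.fst_swap, Prod.snd_swap, add_comm]

section

variable [DecidableEq E]

lemma outDeg_update_of_mem {o : E → V × V} {F : Finset E} {e : E} (he : e ∈ F) (p : V × V)
    (v : V) :
    outDeg (Function.update o e p) F v = outDeg o (F.erase e) v + if p.1 = v then 1 else 0 := by
  rw [outDeg, outDeg, card_filter, card_filter, ← sum_erase_add F _ he, Function.update_self]
  congr 1
  exact sum_congr rfl fun e' he' => by rw [Function.update_of_ne (ne_of_mem_erase he')]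

lemma inDeg_update_of_mem {o : E → V × V} {F : Finset E} {e : E} (he : e ∈ F) (p : V × V)
    (v : V) :
    inDeg (Function.update o e p) F v = inDeg o (F.erase e) v + if p.2 = v then 1 else 0 := by
  rw [inDeg, inDeg, card_filter, card_filter, ← sum_erase_add F _ he, Function.update_self]
  congr 1
  exact sum_congr rfl fun e' he' => by rw [Function.update_of_ne (ne_of_mem_erase he')]

lemma IsUnitFlow.update_of_erase {o : E → V × V} {F : Finset E} {e : E} (he : e ∈ F)
    {p : V × V} {b : V} (hflow : IsUnitFlow o (F.erase e) p.2 b) :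
    IsUnitFlow (Function.update o e p) F p.1 b := fun v => by
  have := hflow v
  rw [outDeg_update_of_mem he, inDeg_update_of_mem he]
  simp only [eq_comm (b := v)]
  split_ifs at this ⊢ <;> omega

lemma degIn_eq_erase_add (G : SignedMultigraph V E) {F : Finset E} {e : E} (he : e ∈ F)
    {p : V × V} (hp : p = G.ends e ∨ p = (G.ends e).swap) (v : V) :
    G.degIn F v =
      G.degIn (F.erase e) v + ((if v = p.1 then 1 else 0) + (if v = p.2 then 1 else 0)) := by
  rw [degIn, ← sum_erase_add F _ he]
  congr 1
  rcases hp with rfl | rfl <;>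
    simp only [Prod.fst_swap, Prod.snd_swap, eq_comm (b := v), add_comm]

lemma degIn_sdiff_add (G : SignedMultigraph V E) {F T : Finset E} (hT : T ⊆ F) (v : V) :
    G.degIn (F \ T) v + G.degIn T v = G.degIn F v :=
  sum_sdiff hT

/-- The parity condition says that adding a virtual edge from `b` to `a` makes all degrees even.
The induction removes an edge `e` at `a` and asks for a unit flow from the other end of `e`. -/
theorem exists_isUnitFlow (G : SignedMultigraph V E) (F : Finset E) (a b : V)
    (hpar : ∀ v, Even (G.degIn F v + (if v = a then 1 else 0) + (if v = b then 1 else 0))) :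
    ∃ o, G.IsReorientation o ∧ IsUnitFlow o F a b := by
  induction F using Finset.strongInduction generalizing a b with
  | H F IH =>
  have along : ∀ e ∈ F, ∀ p : V × V, (p = G.ends e ∨ p = (G.ends e).swap) → ∀ b : V,
      (∀ v, Even (G.degIn F v + (if v = p.1 then 1 else 0) + (if v = b then 1 else 0))) →
      ∃ o, G.IsReorientation o ∧ IsUnitFlow o F p.1 b := by
    intro e he p hp b hpar
    obtain ⟨o, ho, hflow⟩ := IH (F.erase e) (erase_ssubset he) p.2 b fun v => by
      have h := hpar v
      rw [G.degIn_eq_erase_add he hp, Nat.even_iff] at h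
      rw [Nat.even_iff]
      split_ifs at h ⊢ <;> omega
    exact ⟨_, ho.update hp, hflow.update_of_erase he⟩
  by_cases hinc : ∃ e ∈ F, ∃ y, (a, y) = G.ends e ∨ (a, y) = (G.ends e).swap
  · obtain ⟨e, he, y, hp⟩ := hinc
    exact along e he (a, y) hp b hpar
  push Not at hinc
  have hdeg : G.degIn F a = 0 := sum_eq_zero fun e he => by
    have h1 : (G.ends e).1 ≠ a := fun h => (hinc e he (G.ends e).2).1 (Prod.ext h.symm rfl)
    have h2 : (G.ends e).2 ≠ a := fun h => (hinc e he (G.ends e).1).2 (Prod.ext h.symm rfl)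
    simp [h1, h2]
  obtain rfl : b = a := by
    by_contra hba
    simpa [hdeg, Ne.symm hba] using hpar a
  -- a unit flow from `a` to itself does not depend on `a`, which may thus be moved onto `F`
  rcases F.eq_empty_or_nonempty with rfl | ⟨e, he⟩
  · exact ⟨G.ends, fun _ => Or.inl rfl, fun v => by simp [outDeg, inDeg]⟩
  obtain ⟨o, ho, hflow⟩ := along e he (G.ends e) (Or.inl rfl) (G.ends e).1 fun v => by
    have h := hpar v
    rw [Nat.even_iff] at h ⊢
    split_ifs at h ⊢ <;> omega
  exact ⟨o, ho, fun v => by have := hflow v; split_ifs at this ⊢ <;> omega⟩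

end

theorem exists_reorientation_outDeg_eq_inDeg [DecidableEq E] (G : SignedMultigraph V E)
    (F : Finset E) (hF : ∀ v, Even (G.degIn F v)) :
    ∃ o, G.IsReorientation o ∧ ∀ v, outDeg o F v = inDeg o F v := by
  rcases isEmpty_or_nonempty V with hV | ⟨⟨a⟩⟩
  · exact ⟨G.ends, fun _ => Or.inl rfl, isEmptyElim⟩
  obtain ⟨o, ho, hbal⟩ := G.exists_isUnitFlow F a a fun v => by
    rw [add_assoc, ← two_mul]
    exact (hF v).add (even_two_mul _)
  exact ⟨o, ho, fun v => Nat.add_right_cancel (hbal v)⟩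

/-- Hall's theorem for the bipartite graph joining the tail copy of each vertex to the head copy
of its out-neighbours, which is `k`-regular. -/
theorem exists_subset_outDeg_eq_one_and_inDeg_eq_one [Fintype V] (o : E → V × V) (F : Finset E)
    {k : ℕ} (hk : k ≠ 0) (hout : ∀ v, outDeg o F v = k) (hin : ∀ v, inDeg o F v = k) :
    ∃ T ⊆ F, ∀ v, outDeg o T v = 1 ∧ inDeg o T v = 1 := by
  classical
  set t : V → Finset V := fun v => {e ∈ F | (o e).1 = v}.image fun e => (o e).2
  have hall : ∀ A : Finset V, #A ≤ #(A.biUnion t) := by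
    intro A
    have hsub : {e ∈ F | (o e).1 ∈ A} ⊆ {e ∈ F | (o e).2 ∈ A.biUnion t} := by
      intro e he
      obtain ⟨heF, heA⟩ := mem_filter.mp he
      refine mem_filter.mpr ⟨heF, mem_biUnion.mpr ⟨_, heA, ?_⟩⟩
      exact mem_image_of_mem _ (mem_filter.mpr ⟨heF, rfl⟩)
    have hmul : #A * k ≤ #(A.biUnion t) * k :=
      calc #A * k = ∑ v ∈ A, outDeg o F v := by rw [sum_const_nat fun v _ => hout v]
        _ = #{e ∈ F | (o e).1 ∈ A} := sum_card_fiberwise_eq_card_filter F A _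
        _ ≤ #{e ∈ F | (o e).2 ∈ A.biUnion t} := card_le_card hsub
        _ = ∑ v ∈ A.biUnion t, inDeg o F v := (sum_card_fiberwise_eq_card_filter _ _ _).symm
        _ = #(A.biUnion t) * k := by rw [sum_const_nat fun v _ => hin v]
    exact Nat.le_of_mul_le_mul_right hmul (Nat.pos_of_ne_zero hk)
  obtain ⟨ι, hι, hιt⟩ := (all_card_le_biUnion_card_iff_exists_injective t).mp hall
  choose ε hε hει using fun v => mem_image.mp (hιt v)
  have hεF v : ε v ∈ F := (mem_filter.mp (hε v)).1
  have hεo v : (o (ε v)).1 = v := (mem_filter.mp (hε v)).2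
  have hεinj : Function.Injective ε := fun u u' h => by rw [← hεo u, ← hεo u', h]
  obtain ⟨ι', hι'⟩ := Finite.injective_iff_surjective.mp hι |>.hasRightInverse
  refine ⟨univ.image ε, image_subset_iff.mpr fun v _ => hεF v, fun v => ⟨?_, ?_⟩⟩
  · rw [outDeg, filter_image, card_image_of_injective _ hεinj, card_eq_one]
    exact ⟨v, by ext u; simp [hεo]⟩
  · rw [inDeg, filter_image, card_image_of_injective _ hεinj, card_eq_one]
    refine ⟨ι' v, ?_⟩
    ext u
    simp only [hει, mem_filter, mem_univ, true_and, mem_singleton]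
    exact ⟨fun h => hι (h.trans (hι' v).symm), fun h => h ▸ hι' v⟩

/-- Petersen's 2-factor theorem. -/
theorem exists_twoFactor [Fintype V] [DecidableEq E] (G : SignedMultigraph V E) {F : Finset E}
    {k : ℕ} (hk : k ≠ 0) (hF : ∀ v, G.degIn F v = 2 * k) :
    ∃ T ⊆ F, ∀ v, G.degIn T v = 2 := by
  obtain ⟨o, ho, hbal⟩ :=
    G.exists_reorientation_outDeg_eq_inDeg F fun v => hF v ▸ even_two_mul k
  have hdeg v : outDeg o F v + inDeg o F v = 2 * k := (ho.outDeg_add_inDeg F v).trans (hF v)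
  obtain ⟨T, hTF, hT⟩ := exists_subset_outDeg_eq_one_and_inDeg_eq_one o F hk
    (fun v => by have := hdeg v; have := hbal v; omega)
    (fun v => by have := hdeg v; have := hbal v; omega)
  exact ⟨T, hTF, fun v => by rw [← ho.outDeg_add_inDeg, (hT v).1, (hT v).2]⟩

def edgeSum (G : SignedMultigraph V E) (F : Finset E) (g : E → ℤ) (v : V) : ℤ :=
  ∑ e ∈ F, ((if (G.ends e).1 = v then g e else 0) + (if (G.ends e).2 = v then g e else 0))

lemma edgeSum_const (G : SignedMultigraph V E) {F : Finset E} {g : E → ℤ} {c : ℤ}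
    (hg : ∀ e ∈ F, g e = c) (v : V) : G.edgeSum F g v = c * G.degIn F v := by
  simp only [edgeSum, degIn, Nat.cast_sum, mul_sum]
  refine sum_congr rfl fun e he => ?_
  rw [hg e he]
  split_ifs <;> push_cast <;> ring

lemma edgeSum_neg (G : SignedMultigraph V E) (F : Finset E) (g : E → ℤ) (v : V) :
    G.edgeSum F (fun e => -g e) v = -G.edgeSum F g v := by
  simp only [edgeSum, ← sum_neg_distrib]
  refine sum_congr rfl fun e _ => ?_
  split_ifs <;> simp

lemma edgeSum_ite_mem [DecidableEq E] (G : SignedMultigraph V E) {F T : Finset E} (hT : T ⊆ F)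
    (c : ℤ) (g : E → ℤ) (v : V) :
    G.edgeSum F (fun e => if e ∈ T then c else g e) v =
      c * G.degIn T v + G.edgeSum (F \ T) g v := by
  rw [edgeSum, ← sum_sdiff hT, add_comm]
  congr 1
  · exact G.edgeSum_const (fun e he => if_pos he) v
  · exact sum_congr rfl fun e he => by rw [if_neg (mem_sdiff.mp he).2]

theorem exists_edgeSum_eq_ite_even [Fintype V] [DecidableEq E] (G : SignedMultigraph V E)
    (k : ℕ) (F : Finset E) (hF : ∀ v, G.degIn F v = 2 * k) :
    ∃ g : E → ℤ, (∀ e, g e = 1 ∨ g e = -1) ∧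
      ∀ v, G.edgeSum F g v = if Even k then 0 else 2 := by
  induction k generalizing F with
  | zero => exact ⟨fun _ => 1, fun _ => Or.inl rfl, fun v => by simp [G.edgeSum_const, hF]⟩
  | succ k ih =>
    obtain ⟨T, hTF, hT⟩ := G.exists_twoFactor k.succ_ne_zero hF
    obtain ⟨g, hg, hsum⟩ := ih (F \ T) fun v => by
      have := G.degIn_sdiff_add hTF v
      rw [hF, hT] at this
      omega
    refine ⟨fun e => if e ∈ T then (if Even k then 1 else -1) else g e,
      fun e => ?_, fun v => ?_⟩
    · dsimp only
      split_ifs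
      exacts [Or.inl rfl, Or.inr rfl, hg e]
    · rw [G.edgeSum_ite_mem hTF, hT, hsum]
      by_cases hk : Even k <;> simp [hk, Nat.even_add_one]

theorem exists_edgeSum_eq_two [Fintype V] [DecidableEq E] (G : SignedMultigraph V E) {k : ℕ}
    (hk : k ≠ 0) {F : Finset E} (hF : ∀ v, G.degIn F v = 2 * k) :
    ∃ g : E → ℤ, (∀ e, 1 ≤ |g e| ∧ |g e| ≤ 2) ∧ ∀ v, G.edgeSum F g v = 2 := by
  rcases Nat.even_or_odd k with hk' | hk'
  · -- a 2-factor labelled `2` contributes `4`, to be cancelled by a negated labelling of the rest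
    obtain ⟨T, hTF, hT⟩ := G.exists_twoFactor hk hF
    obtain ⟨g, hg, hsum⟩ := G.exists_edgeSum_eq_ite_even (k - 1) (F \ T) fun v => by
      have := G.degIn_sdiff_add hTF v
      rw [hF, hT] at this
      omega
    have hodd : ¬Even (k - 1) := by
      rw [Nat.not_even_iff_odd]; exact Nat.Even.sub_odd (by omega) hk' odd_one
    refine ⟨fun e => if e ∈ T then 2 else -g e, fun e => ?_, fun v => ?_⟩
    · dsimp only
      split_ifs
      · norm_num
      · rcases hg e with h | h <;> simp [h]
    · rw [G.edgeSum_ite_mem hTF, G.edgeSum_neg, hT, hsum, if_neg hodd]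
      norm_num
  · obtain ⟨g, hg, hsum⟩ := G.exists_edgeSum_eq_ite_even k F hF
    refine ⟨g, fun e => ?_, fun v => by rw [hsum, if_neg (Nat.not_even_iff_odd.mpr hk')]⟩
    rcases hg e with h | h <;> simp [h]

end SignedMultigraph

open SignedMultigraph in
/-- Every odd `r`-regular graph (`r ≥ 3`) with a perfect matching has a zero-sum 3-flow. -/
theorem stmt_17 {V E : Type} [Fintype V] [Fintype E] [DecidableEq V] [DecidableEq E]
    (G : SignedMultigraph V E) (r : ℕ) (hr3 : 3 ≤ r) (hodd : Odd r)
    (hreg : ∀ v : V, G.degIn Finset.univ v = r)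
    (hpm : ∃ M : Finset E, ∀ v : V, G.degIn M v = 1) :
    G.ZeroSumFlow 3 := by
  obtain ⟨M, hM⟩ := hpm
  obtain ⟨k, rfl⟩ := hodd
  have hrest v : G.degIn (univ \ M) v = 2 * k := by
    have := G.degIn_sdiff_add (subset_univ M) v
    rw [hreg, hM] at this
    omega
  obtain ⟨g, hg, hsum⟩ := G.exists_edgeSum_eq_two (by omega) hrest
  refine ⟨fun e => if e ∈ M then -2 else g e, fun e => ?_, fun v => ?_⟩
  · dsimp only
    split_ifs
    · norm_num
    · exact ⟨(hg e).1, by linarith [(hg e).2]⟩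
  · change G.edgeSum univ _ v = 0
    rw [G.edgeSum_ite_mem (subset_univ M), hM, hsum]
    norm_num
end
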